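/- For Q̂ > 0, χ̂ > 0, Λ > 0, with g(z) = sign(z)·max(sqrt(χ̂)|z| − sqrt(Λ), 0)/Q̂ and z standard Gaussian: E[g(z)²] = (1/Q̂²)[ (Λ + χ̂) erfc( sqrt(Λ/(2χ̂)) ) − sqrt(2Λχ̂/π) exp(−Λ/(2χ̂)) ]. -/

import Mathlib

/-!
With `a = √(Λ/χ̂)` the integrand is `(χ̂/Q̂²) · max(|z| - a, 0)²`, so by symmetry the moment is
`(2χ̂/Q̂²) ∫_a^∞ (z - a)² φ(z) dz`. Writing `(z - a)² = (1 + a²) + ((z - a)² - (1 + a²))`, the first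
part is a Gaussian tail and gives the `erfc` term, while the second is the derivative of
`(2a - z) e^{-z²/2}`, which vanishes at `+∞` and contributes the exponential term.
-/

open MeasureTheory ProbabilityTheory

noncomputable def erfc (x : ℝ) : ℝ :=
  (2 / Real.sqrt Real.pi) * ∫ t in Set.Ioi x, Real.exp (-t ^ 2)

open Real Set Filter

lemma integrable_pow_mul_exp_neg_sq_div_two (n : ℕ) :
    Integrable fun z : ℝ => z ^ n * exp (-z ^ 2 / 2) := by
  refine (integrable_rpow_mul_exp_neg_mul_sq (b := 1 / 2) (by norm_num) (s := n)
    (by linarith [n.cast_nonneg (α := ℝ)])).congr (Eventually.of_forall fun z => ?_)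
  simp only [rpow_natCast]
  congr 2
  ring

lemma integral_Ioi_exp_neg_sq_div_two (a : ℝ) :
    ∫ z in Ioi a, exp (-z ^ 2 / 2) = √(π / 2) * erfc (a / √2) := by
  have hscale : ∫ z in Ioi a, exp (-z ^ 2 / 2) = √2 * ∫ t in Ioi (a / √2), exp (-t ^ 2) := by
    have := integral_comp_mul_right_Ioi (fun t => exp (-t ^ 2)) a (inv_pos.2 (sqrt_pos.2 two_pos))
    simpa [mul_pow, sq_sqrt zero_le_two, div_eq_mul_inv, neg_div] using this
  rw [hscale, erfc, sqrt_div' _ zero_le_two]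
  field_simp
  rw [sq_sqrt zero_le_two, mul_comm]

lemma hasDerivAt_two_mul_sub_mul_exp_neg_sq_div_two (a z : ℝ) :
    HasDerivAt (fun z => (2 * a - z) * exp (-z ^ 2 / 2))
      (((z - a) ^ 2 - (1 + a ^ 2)) * exp (-z ^ 2 / 2)) z := by
  have hexponent : HasDerivAt (fun z : ℝ => -z ^ 2 / 2) (-z) z :=
    ((hasDerivAt_pow 2 z).neg.div_const 2).congr_deriv (by ring)
  exact (((hasDerivAt_id z).const_sub (2 * a)).mul hexponent.exp).congr_deriv
    (by simp only [id]; ring)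

lemma integral_Ioi_sub_sq_mul_exp_neg_sq_div_two (a : ℝ) :
    ∫ z in Ioi a, (z - a) ^ 2 * exp (-z ^ 2 / 2) =
      (1 + a ^ 2) * √(π / 2) * erfc (a / √2) - a * exp (-a ^ 2 / 2) := by
  have hquadratic (c₀ c₁ c₂ : ℝ) :
      Integrable fun z : ℝ => (c₀ + c₁ * z + c₂ * z ^ 2) * exp (-z ^ 2 / 2) := by
    refine ((((integrable_pow_mul_exp_neg_sq_div_two 0).const_mul c₀).add
      ((integrable_pow_mul_exp_neg_sq_div_two 1).const_mul c₁)).add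
      ((integrable_pow_mul_exp_neg_sq_div_two 2).const_mul c₂)).congr
        (Eventually.of_forall fun z => ?_)
    simp only [Pi.add_apply]
    ring
  have hderiv := hasDerivAt_two_mul_sub_mul_exp_neg_sq_div_two a
  have hF' : Integrable fun z => ((z - a) ^ 2 - (1 + a ^ 2)) * exp (-z ^ 2 / 2) :=
    (hquadratic (-1) (-2 * a) 1).congr (Eventually.of_forall fun z => by ring)
  have hF : Integrable fun z => (2 * a - z) * exp (-z ^ 2 / 2) :=
    (hquadratic (2 * a) (-1) 0).congr (Eventually.of_forall fun z => by ring)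
  have hG : Integrable fun z => (1 + a ^ 2) * exp (-z ^ 2 / 2) :=
    (hquadratic (1 + a ^ 2) 0 0).congr (Eventually.of_forall fun z => by ring)
  have hFTC : ∫ z in Ioi a, ((z - a) ^ 2 - (1 + a ^ 2)) * exp (-z ^ 2 / 2) =
      0 - (2 * a - a) * exp (-a ^ 2 / 2) :=
    integral_Ioi_of_hasDerivAt_of_tendsto' (fun z _ => hderiv z) hF'.integrableOn
      (tendsto_zero_of_hasDerivAt_of_integrableOn_Ioi (a := a) (fun z _ => hderiv z)
        hF'.integrableOn hF.integrableOn)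
  calc ∫ z in Ioi a, (z - a) ^ 2 * exp (-z ^ 2 / 2)
      = ∫ z in Ioi a, (((z - a) ^ 2 - (1 + a ^ 2)) * exp (-z ^ 2 / 2) +
          (1 + a ^ 2) * exp (-z ^ 2 / 2)) :=
        setIntegral_congr_fun measurableSet_Ioi fun z _ => by ring
    _ = (1 + a ^ 2) * (∫ z in Ioi a, exp (-z ^ 2 / 2)) - a * exp (-a ^ 2 / 2) := by
        rw [integral_add hF'.integrableOn hG.integrableOn, hFTC, integral_const_mul]
        ring
    _ = _ := by rw [integral_Ioi_exp_neg_sq_div_two, mul_assoc]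

lemma integral_gaussianReal_zero_one (f : ℝ → ℝ) :
    ∫ z, f z ∂gaussianReal 0 1 = (√(2 * π))⁻¹ * ∫ z, f z * exp (-z ^ 2 / 2) := by
  rw [integral_gaussianReal_eq_integral_smul one_ne_zero, ← integral_const_mul]
  refine integral_congr_ae (Eventually.of_forall fun z => ?_)
  simp only [gaussianPDFReal, smul_eq_mul, NNReal.coe_one, mul_one, sub_zero]
  ring

lemma integral_max_abs_sub_sq_gaussianReal {a : ℝ} (ha : 0 ≤ a) :
    ∫ z, max (|z| - a) 0 ^ 2 ∂gaussianReal 0 1 =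
      (1 + a ^ 2) * erfc (a / √2) - √(2 / π) * a * exp (-a ^ 2 / 2) := by
  have heven : ∫ z, max (|z| - a) 0 ^ 2 * exp (-z ^ 2 / 2) =
      ∫ z, (fun t => max (t - a) 0 ^ 2 * exp (-t ^ 2 / 2)) |z| := by
    simp only [sq_abs]
  have hrestrict : ∫ z in Ioi 0, max (z - a) 0 ^ 2 * exp (-z ^ 2 / 2) =
      ∫ z in Ioi a, (z - a) ^ 2 * exp (-z ^ 2 / 2) := by
    rw [setIntegral_eq_of_subset_of_forall_sdiff_eq_zero measurableSet_Ioi (Ioi_subset_Ioi ha)]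
    · exact setIntegral_congr_fun measurableSet_Ioi fun z hz => by
        rw [max_eq_left (sub_nonneg.2 (le_of_lt hz))]
    · rintro z ⟨-, hz⟩
      rw [max_eq_right (sub_nonpos.2 (not_lt.1 hz))]
      simp
  rw [integral_gaussianReal_zero_one, heven,
    integral_comp_abs (f := fun t => max (t - a) 0 ^ 2 * exp (-t ^ 2 / 2)), hrestrict,
    integral_Ioi_sub_sq_mul_exp_neg_sq_div_two, sqrt_mul zero_le_two, sqrt_div' _ zero_le_two,
    sqrt_div' _ pi_pos.le]
  have hπ : 0 < √π := sqrt_pos.2 pi_pos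
  have h2 : 0 < √2 := sqrt_pos.2 two_pos
  field_simp
  rw [sq_sqrt zero_le_two]

lemma sq_sign_mul_max_sub (z c d : ℝ) (hd : 0 ≤ d) :
    (sign z * max (c * |z| - d) 0) ^ 2 = max (c * |z| - d) 0 ^ 2 := by
  rcases eq_or_ne z 0 with rfl | hz
  · simp [hd]
  · rcases sign_apply_eq_of_ne_zero z hz with h | h <;> simp [h]

lemma max_sqrt_mul_sub_sqrt {c : ℝ} (hc : 0 < c) (d z : ℝ) :
    max (√c * z - √d) 0 = √c * max (z - √(d / c)) 0 := by
  rw [mul_max_of_nonneg _ _ (sqrt_nonneg c), mul_zero, mul_sub, ← sqrt_mul hc.le,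
    mul_div_cancel₀ _ hc.ne']

theorem gaussian_soft_threshold_second_moment_general (Qh χh Λ : ℝ)
    (hχ : 0 < χh) (hΛ : 0 < Λ) :
    (∫ z : ℝ,
        (Real.sign z * max (Real.sqrt χh * |z| - Real.sqrt Λ) 0 / Qh) ^ 2
        ∂(gaussianReal 0 1)) =
      (1 / Qh ^ 2) *
        ((Λ + χh) * erfc (Real.sqrt (Λ / (2 * χh))) -
          Real.sqrt (2 * Λ * χh / Real.pi) * Real.exp (-Λ / (2 * χh))) := by
  have hpointwise (z : ℝ) : (sign z * max (√χh * |z| - √Λ) 0 / Qh) ^ 2 =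
      χh / Qh ^ 2 * max (|z| - √(Λ / χh)) 0 ^ 2 := by
    rw [div_pow, sq_sign_mul_max_sub _ _ _ (sqrt_nonneg Λ), max_sqrt_mul_sub_sqrt hχ, mul_pow,
      sq_sqrt hχ.le]
    ring
  have hsq : √(Λ / χh) ^ 2 = Λ / χh := sq_sqrt (div_pos hΛ hχ).le
  have herfc : √(Λ / χh) / √2 = √(Λ / (2 * χh)) := by
    rw [← sqrt_div' _ zero_le_two, div_div, mul_comm]
  have hexp : exp (-(Λ / χh) / 2) = exp (-Λ / (2 * χh)) := by
    rw [neg_div, neg_div, div_div, mul_comm]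
  have hcoeff : √(2 * Λ * χh / π) = √(2 / π) * √(Λ / χh) * χh := by
    rw [show 2 * Λ * χh / π = 2 / π * (Λ / χh) * χh ^ 2 by field_simp,
      sqrt_mul (by positivity), sqrt_mul (by positivity), sqrt_sq hχ.le]
  simp_rw [hpointwise]
  rw [integral_const_mul, integral_max_abs_sub_sq_gaussianReal (sqrt_nonneg _), herfc, hsq,
    hexp, hcoeff]
  field_simp
  ring

theorem gaussian_soft_threshold_second_moment (Qh χh Λ : ℝ)
    (hQ : 0 < Qh) (hχ : 0 < χh) (hΛ : 0 < Λ) :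
    (∫ z : ℝ,
        (Real.sign z * max (Real.sqrt χh * |z| - Real.sqrt Λ) 0 / Qh) ^ 2
        ∂(gaussianReal 0 1)) =
      (1 / Qh ^ 2) *
        ((Λ + χh) * erfc (Real.sqrt (Λ / (2 * χh))) -
          Real.sqrt (2 * Λ * χh / Real.pi) * Real.exp (-Λ / (2 * χh))) :=
  gaussian_soft_threshold_second_moment_general Qh χh Λ hχ hΛ
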